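/- Let W_o be the set of m×m real matrices of the form X = [[0, B],[Bᵀ, C]] with B ∈ Mat(k×2n,ℝ) and C ∈ Mat(2n×2n,ℝ) satisfying Cᵀ = −C and C·J + J·C = 0 (these are exactly the elements of the Lie algebra o(k,2n,ℝ) lying in the sum of the (−1)-eigenspaces of σ and σ²). Then for every nonzero X ∈ W_o one has Tr(ρ·(X·(Ĵ⁻X) − (Ĵ⁻X)·X)) > 0; i.e. the metric g⁻(X,Y) = ω(X, j⁻Y) associated to j⁻ is positive definite, so (ω, j⁻) is an almost Kähler structure on SO₀(k,2n,ℝ)/(SO(k,ℝ)×U(n)). -/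

import Mathlib

open Matrix

/-- The standard complex structure matrix `J = [[0, -Id_n],[Id_n, 0]]`. -/
noncomputable def Jmat (n : ℕ) : Matrix (Fin n ⊕ Fin n) (Fin n ⊕ Fin n) ℝ :=
  Matrix.fromBlocks 0 (-1) 1 0

/-- The matrix `ρ = [[0,0],[0,J]]` with block sizes `k` and `2n`. -/
noncomputable def rhoMat (k n : ℕ) :
    Matrix (Fin k ⊕ (Fin n ⊕ Fin n)) (Fin k ⊕ (Fin n ⊕ Fin n)) ℝ :=
  Matrix.fromBlocks 0 0 0 (Jmat n)

/-- The map `Ĵ⁻ : [[A,B],[B',C]] ↦ [[0, −B·J],[J·B', −(J·C − C·J)/2]]`. -/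
noncomputable def JhatMinus (k n : ℕ)
    (X : Matrix (Fin k ⊕ (Fin n ⊕ Fin n)) (Fin k ⊕ (Fin n ⊕ Fin n)) ℝ) :
    Matrix (Fin k ⊕ (Fin n ⊕ Fin n)) (Fin k ⊕ (Fin n ⊕ Fin n)) ℝ :=
  Matrix.fromBlocks 0 (-(X.toBlocks₁₂ * Jmat n)) (Jmat n * X.toBlocks₂₁)
    (-((1 / 2 : ℝ) • (Jmat n * X.toBlocks₂₂ - X.toBlocks₂₂ * Jmat n)))

/-- `W_o` : the part of `o(k,2n,ℝ)` lying in the sum of the `(−1)`-eigenspaces of `σ`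
and `σ²`, i.e. matrices `[[0,B],[Bᵀ,C]]` with `Cᵀ = −C` and `C·J + J·C = 0`. -/
def Wo (k n : ℕ) : Set (Matrix (Fin k ⊕ (Fin n ⊕ Fin n)) (Fin k ⊕ (Fin n ⊕ Fin n)) ℝ) :=
  {X | ∃ (B : Matrix (Fin k) (Fin n ⊕ Fin n) ℝ)
    (C : Matrix (Fin n ⊕ Fin n) (Fin n ⊕ Fin n) ℝ),
    C.transpose = -C ∧ C * Jmat n + Jmat n * C = 0 ∧
    X = Matrix.fromBlocks 0 B B.transpose C}

/-!
Since `C` anticommutes with `J`, `(JC − CJ)/2 = JC`, so `Ĵ⁻X = [[0, −BJ], [JBᵀ, −JC]]`.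
Only the lower-right block of the commutator meets `ρ`, and there `J² = −1`, `JCJ = C` and
cyclicity of the trace give `Tr(ρ[X, Ĵ⁻X]) = 2 (Tr BᵀB − Tr C²) = 2 (Tr BᵀB + Tr CᵀC)`,
twice the sum of the squared Frobenius norms of `B` and `C`.
-/

lemma Matrix.trace_fromBlocks {R l m : Type*} [Fintype l] [Fintype m] [AddCommMonoid R]
    (A : Matrix l l R) (B : Matrix l m R) (C : Matrix m l R) (D : Matrix m m R) :
    (fromBlocks A B C D).trace = A.trace + D.trace := by
  simp [trace, Fintype.sum_sum_type]

section TransposeMulSelf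

variable {l m : Type*} [Fintype l] [Fintype m]

lemma Matrix.trace_transpose_mul_self_nonneg (A : Matrix l m ℝ) : 0 ≤ (Aᵀ * A).trace := by
  simpa [conjTranspose_eq_transpose_of_trivial] using
    (posSemidef_conjTranspose_mul_self A).trace_nonneg

lemma Matrix.trace_transpose_mul_self_pos {A : Matrix l m ℝ} (hA : A ≠ 0) :
    0 < (Aᵀ * A).trace := by
  refine (trace_transpose_mul_self_nonneg A).lt_of_ne' fun h => hA ?_
  rwa [← conjTranspose_eq_transpose_of_trivial, trace_conjTranspose_mul_self_eq_zero_iff] at h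

end TransposeMulSelf

lemma trace_fromBlocks_commutator {R l m : Type*} [CommRing R] [Fintype l] [Fintype m]
    [DecidableEq m] {J C : Matrix m m R} (B : Matrix l m R) (hJ : J * J = -1)
    (hCJ : C * J = -(J * C)) (hC : Cᵀ = -C) :
    (fromBlocks 0 0 0 J *
      (fromBlocks 0 B Bᵀ C * fromBlocks 0 (-(B * J)) (J * Bᵀ) (-(J * C)) -
        fromBlocks 0 (-(B * J)) (J * Bᵀ) (-(J * C)) * fromBlocks 0 B Bᵀ C)).trace =
      2 * ((Bᵀ * B).trace + (Cᵀ * C).trace) := by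
  have hJJ (M : Matrix m m R) : J * J * M = -M := by rw [hJ, neg_one_mul]
  have hJJB : J * J * Bᵀ = -Bᵀ := by rw [hJ, Matrix.neg_mul, Matrix.one_mul]
  have hJCJ : J * C * J = C := by
    rw [Matrix.mul_assoc, hCJ, Matrix.mul_neg, ← Matrix.mul_assoc, hJJ, neg_neg]
  have hJBBJ : (J * Bᵀ * B * J).trace = -(Bᵀ * B).trace := by
    rw [trace_mul_comm, ← Matrix.mul_assoc, ← Matrix.mul_assoc, hJJB, Matrix.neg_mul, trace_neg]
  have hCC : (C * C).trace = -(Cᵀ * C).trace := by rw [hC, Matrix.neg_mul, trace_neg, neg_neg]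
  simp only [fromBlocks_multiply, sub_eq_add_neg, fromBlocks_neg, fromBlocks_add,
    trace_fromBlocks, Matrix.zero_mul, Matrix.mul_zero, zero_add, add_zero, trace_zero,
    Matrix.mul_add, Matrix.mul_neg, Matrix.neg_mul, neg_neg, trace_add, trace_neg,
    ← Matrix.mul_assoc, hJJ, hJJB, hJCJ, hJBBJ, hCC]
  ring

lemma JhatMinus_fromBlocks {k n : ℕ} (B : Matrix (Fin k) (Fin n ⊕ Fin n) ℝ)
    {C : Matrix (Fin n ⊕ Fin n) (Fin n ⊕ Fin n) ℝ} (hCJ : C * Jmat n + Jmat n * C = 0) :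
    JhatMinus k n (fromBlocks 0 B Bᵀ C) =
      fromBlocks 0 (-(B * Jmat n)) (Jmat n * Bᵀ) (-(Jmat n * C)) := by
  rw [JhatMinus, toBlocks_fromBlocks₁₂, toBlocks_fromBlocks₂₁, toBlocks_fromBlocks₂₂,
    eq_neg_of_add_eq_zero_left hCJ, sub_neg_eq_add, ← two_smul ℝ, smul_smul]
  norm_num

theorem gMinus_positive_definite_so_k_2n_general (k n : ℕ)
    (X : Matrix (Fin k ⊕ (Fin n ⊕ Fin n)) (Fin k ⊕ (Fin n ⊕ Fin n)) ℝ)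
    (hX : X ∈ Wo k n) (hX0 : X ≠ 0) :
    0 < Matrix.trace (rhoMat k n * (X * JhatMinus k n X - JhatMinus k n X * X)) := by
  obtain ⟨B, C, hCt, hCJ, rfl⟩ := hX
  have hJ : Jmat n * Jmat n = -1 := J_squared (Fin n) ℝ
  rw [rhoMat, JhatMinus_fromBlocks B hCJ,
    trace_fromBlocks_commutator B hJ (eq_neg_of_add_eq_zero_left hCJ) hCt]
  have hB := trace_transpose_mul_self_nonneg B
  have hC := trace_transpose_mul_self_nonneg C
  obtain hB0 | hC0 : B ≠ 0 ∨ C ≠ 0 := by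
    contrapose! hX0
    simp [hX0.1, hX0.2]
  · linarith [trace_transpose_mul_self_pos hB0]
  · linarith [trace_transpose_mul_self_pos hC0]

theorem gMinus_positive_definite_so_k_2n (k n : ℕ) (hk : 0 < k) (hn : 0 < n)
    (X : Matrix (Fin k ⊕ (Fin n ⊕ Fin n)) (Fin k ⊕ (Fin n ⊕ Fin n)) ℝ)
    (hX : X ∈ Wo k n) (hX0 : X ≠ 0) :
    0 < Matrix.trace (rhoMat k n * (X * JhatMinus k n X - JhatMinus k n X * X)) :=
  gMinus_positive_definite_so_k_2n_general k n X hX hX0
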